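/- arXiv:2006.01069 — 3 statements merged into one kernel-verified Lean document; each statement's English description precedes it below -/
import Mathlib

section
/- Let n ≥ 1 and let x, y, z, a, b, c, a', b', c' be n×n complex matrices. Assume the point conditions [x,y] = 0 and [x,z] = 0, and the tangency conditions [a,y] + [x,b] = 0, [a,z] + [x,c] = 0, [a',y] + [x,b'] = 0, [a',z] + [x,c'] = 0. Then tr(a·([b',z] + [y,c'])) = tr(a'·([b,z] + [y,c])). (This is the pointwise form of the statement that the subvariety Λₙ = {(x,[y,z]) : [x,y] = [x,z] = 0} is isotropic in T*M_n(ℂ) for the symplectic form ω((u,v),(u',v')) = tr(u·v' − v·u').) -/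
open Matrix

private lemma key {n : ℕ} (p q r : Matrix (Fin n) (Fin n) ℂ) :
    Matrix.trace (p * (q * r - r * q)) = Matrix.trace ((r * p - p * r) * q) := by
  simp only [mul_sub, sub_mul, Matrix.trace_sub, ← mul_assoc]
  rw [Matrix.trace_mul_cycle r p q, Matrix.trace_mul_cycle p r q, Matrix.trace_mul_cycle q r p]

private lemma key2 {n : ℕ} (p q r : Matrix (Fin n) (Fin n) ℂ) :
    Matrix.trace (p * (q * r - r * q)) = Matrix.trace ((p * q - q * p) * r) := by
  simp only [mul_sub, sub_mul, Matrix.trace_sub, ← mul_assoc]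
  rw [Matrix.trace_mul_cycle q p r, Matrix.trace_mul_cycle r q p]

private lemma key3 {n : ℕ} (p q r : Matrix (Fin n) (Fin n) ℂ) :
    Matrix.trace (p * (q * r - r * q)) = Matrix.trace (q * (r * p - p * r)) := by
  rw [key, Matrix.trace_mul_comm]

private lemma key4 {n : ℕ} (p q r : Matrix (Fin n) (Fin n) ℂ) :
    Matrix.trace (p * (q * r - r * q)) = Matrix.trace (r * (p * q - q * p)) := by
  rw [key2, Matrix.trace_mul_comm]

/-- Pointwise isotropy of `Λₙ = {(x,[y,z]) : [x,y] = [x,z] = 0}` in `T*Mₙ(ℂ)` with the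
symplectic form `ω((u,v),(u',v')) = tr(uv' - vu')`. -/
theorem stmt_2 (n : ℕ) (hn : 1 ≤ n) (x y z a b c a' b' c' : Matrix (Fin n) (Fin n) ℂ)
    (hxy : x * y = y * x) (hxz : x * z = z * x)
    (h1 : (a * y - y * a) + (x * b - b * x) = 0)
    (h2 : (a * z - z * a) + (x * c - c * x) = 0)
    (h1' : (a' * y - y * a') + (x * b' - b' * x) = 0)
    (h2' : (a' * z - z * a') + (x * c' - c' * x) = 0) :
    Matrix.trace (a * ((b' * z - z * b') + (y * c' - c' * y))) =
      Matrix.trace (a' * ((b * z - z * b) + (y * c - c * y))) := by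
  have E2 : z * a - a * z = x * c - c * x := by
    have h : z * a - a * z - (x * c - c * x) = -((a * z - z * a) + (x * c - c * x)) := by abel
    rw [h2, neg_zero] at h
    exact sub_eq_zero.mp h
  have E1b : a * y - y * a = b * x - x * b := by
    have h : a * y - y * a - (b * x - x * b) = (a * y - y * a) + (x * b - b * x) := by abel
    rw [h1] at h
    exact sub_eq_zero.mp h
  have E1'b : b' * x - x * b' = a' * y - y * a' := by
    have h : b' * x - x * b' - (a' * y - y * a') = -((a' * y - y * a') + (x * b' - b' * x)) := by
      abel
    rw [h1', neg_zero] at h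
    exact sub_eq_zero.mp h
  have E2'b : x * c' - c' * x = z * a' - a' * z := by
    have h : x * c' - c' * x - (z * a' - a' * z) = (a' * z - z * a') + (x * c' - c' * x) := by abel
    rw [h2'] at h
    exact sub_eq_zero.mp h
  have t1 : Matrix.trace (a * (b' * z - z * b')) = Matrix.trace (a' * (y * c - c * y)) := by
    calc Matrix.trace (a * (b' * z - z * b'))
        = Matrix.trace ((z * a - a * z) * b') := key a b' z
      _ = Matrix.trace ((x * c - c * x) * b') := by rw [E2]
      _ = Matrix.trace (c * (b' * x - x * b')) := (key c b' x).symm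
      _ = Matrix.trace (c * (a' * y - y * a')) := by rw [E1'b]
      _ = Matrix.trace (a' * (y * c - c * y)) := key3 c a' y
  have t2 : Matrix.trace (a * (y * c' - c' * y)) = Matrix.trace (a' * (b * z - z * b)) := by
    calc Matrix.trace (a * (y * c' - c' * y))
        = Matrix.trace ((a * y - y * a) * c') := key2 a y c'
      _ = Matrix.trace ((b * x - x * b) * c') := by rw [E1b]
      _ = Matrix.trace (b * (x * c' - c' * x)) := (key2 b x c').symm
      _ = Matrix.trace (b * (z * a' - a' * z)) := by rw [E2'b]
      _ = Matrix.trace (a' * (b * z - z * b)) := key4 b z a'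
  rw [mul_add, mul_add, Matrix.trace_add, Matrix.trace_add, t1, t2, add_comm]
end

section
/- Let r ≥ 1, let α₁, …, α_r be pairwise distinct complex numbers, let m₁, …, m_r be positive integers, and for each k let y_k be an m_k×m_k complex matrix and v_k ∈ ℂ^{m_k} a cyclic vector for y_k (i.e. the vectors y_k^j · v_k for j ≥ 0 span ℂ^{m_k}). Form the block-diagonal matrices x = diag(α₁·I_{m₁}, …, α_r·I_{m_r}) and y = diag(y₁, …, y_r) of size N = m₁ + … + m_r, and the vector v = (v₁, …, v_r) ∈ ℂ^N. Then the smallest ℂ-linear subspace of ℂ^N that contains v and is stable under multiplication by x and by y is all of ℂ^N. -/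
open Matrix Polynomial

private def emb {r : ℕ} (m : Fin r → ℕ) (k : Fin r) :
    (Fin (m k) → ℂ) →ₗ[ℂ] ((Σ k : Fin r, Fin (m k)) → ℂ) where
  toFun u p := if h : p.1 = k then u (h ▸ p.2) else 0
  map_add' u w := by funext p; by_cases h : p.1 = k <;> simp [h]
  map_smul' c u := by funext p; by_cases h : p.1 = k <;> simp [h]

private lemma emb_apply_mk {r : ℕ} (m : Fin r → ℕ) (k : Fin r) (u : Fin (m k) → ℂ)
    (i : Fin (m k)) : emb m k u ⟨k, i⟩ = u i := by
  simp [emb]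

private lemma emb_apply_ne {r : ℕ} (m : Fin r → ℕ) (k : Fin r) (u : Fin (m k) → ℂ)
    (p : Σ k : Fin r, Fin (m k)) (h : p.1 ≠ k) : emb m k u p = 0 := by
  simp [emb, h]

private lemma sum_emb {r : ℕ} (m : Fin r → ℕ) (w : (Σ k : Fin r, Fin (m k)) → ℂ) :
    ∑ k, emb m k (fun i => w ⟨k, i⟩) = w := by
  funext p
  obtain ⟨k, i⟩ := p
  rw [Finset.sum_apply]
  rw [Finset.sum_eq_single k]
  · exact emb_apply_mk m k _ i
  · intro b _ hb
    exact emb_apply_ne m b _ ⟨k, i⟩ (fun h => hb h.symm)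
  · simp

private lemma blockDiagonal'_mulVec_emb {r : ℕ} (m : Fin r → ℕ)
    (y : ∀ k, Matrix (Fin (m k)) (Fin (m k)) ℂ) (k : Fin r) (u : Fin (m k) → ℂ) :
    (Matrix.blockDiagonal' y).mulVec (emb m k u) = emb m k ((y k).mulVec u) := by
  funext p
  obtain ⟨k', i⟩ := p
  rw [mulVec]
  show ∑ q : Σ j, Fin (m j), blockDiagonal' y ⟨k', i⟩ q * emb m k u q = _
  rw [← Finset.univ_sigma_univ, Finset.sum_sigma]
  by_cases h : k' = k
  · subst h
    rw [emb_apply_mk]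
    rw [Finset.sum_eq_single k']
    · simp [mulVec, dotProduct, emb_apply_mk]
    · intro b _ hb
      apply Finset.sum_eq_zero
      intro j _
      rw [blockDiagonal'_apply]
      simp [Ne.symm hb]
    · simp
  · rw [emb_apply_ne m k ((y k).mulVec u) ⟨k', i⟩ h]
    apply Finset.sum_eq_zero
    intro b _
    apply Finset.sum_eq_zero
    intro j _
    by_cases hb : b = k
    · subst hb
      rw [blockDiagonal'_apply]
      simp [h]
    · rw [emb_apply_ne m k u ⟨b, j⟩ hb, mul_zero]

/-- If `x = diag(α₁·I, …, α_r·I)` with pairwise distinct `αₖ`, `y = diag(y₁, …, y_r)`, and each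
`vₖ` is a cyclic vector for `yₖ`, then `v = (v₁, …, v_r)` is a joint cyclic vector for `x` and
`y`: every subspace containing `v` and stable under `x` and `y` is everything. -/
theorem stmt_11 (r : ℕ) (hr : 1 ≤ r) (α : Fin r → ℂ) (hα : Function.Injective α)
    (m : Fin r → ℕ) (hm : ∀ k, 1 ≤ m k)
    (y : ∀ k, Matrix (Fin (m k)) (Fin (m k)) ℂ)
    (v : ∀ k, Fin (m k) → ℂ)
    (hcyc : ∀ k, Submodule.span ℂ
      (Set.range fun j : ℕ => Matrix.mulVec ((y k) ^ j) (v k)) = ⊤) :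
    ∀ W : Submodule ℂ ((Σ k : Fin r, Fin (m k)) → ℂ),
      (fun p : Σ k : Fin r, Fin (m k) => v p.1 p.2) ∈ W →
      (∀ w ∈ W, Matrix.mulVec
        (Matrix.blockDiagonal' fun k => α k • (1 : Matrix (Fin (m k)) (Fin (m k)) ℂ)) w ∈ W) →
      (∀ w ∈ W, Matrix.mulVec (Matrix.blockDiagonal' y) w ∈ W) →
      W = ⊤ := by
  intro W hv hx hy
  -- `x` acts by scaling coordinate `p` by `α p.1`
  have hxw : ∀ w : (Σ k : Fin r, Fin (m k)) → ℂ,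
      Matrix.mulVec
        (Matrix.blockDiagonal' fun k => α k • (1 : Matrix (Fin (m k)) (Fin (m k)) ℂ)) w
        = fun p => α p.1 * w p := by
    intro w
    funext p
    obtain ⟨k, i⟩ := p
    rw [mulVec]
    show ∑ q : Σ j, Fin (m j),
      blockDiagonal' (fun k => α k • (1 : Matrix (Fin (m k)) (Fin (m k)) ℂ)) ⟨k, i⟩ q * w q = _
    rw [← Finset.univ_sigma_univ, Finset.sum_sigma]
    rw [Finset.sum_eq_single k]
    · rw [Finset.sum_eq_single i]
      · simp [Matrix.one_apply]
      · intro j _ hj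
        rw [blockDiagonal'_apply]
        simp [Matrix.one_apply, Ne.symm hj]
      · simp
    · intro b _ hb
      apply Finset.sum_eq_zero
      intro j _
      rw [blockDiagonal'_apply]
      simp [Ne.symm hb]
    · simp
  have hT : ∀ w ∈ W, (fun p : Σ k : Fin r, Fin (m k) => α p.1 * w p) ∈ W := by
    intro w hw
    have := hx w hw
    rwa [hxw] at this
  -- powers
  have hpow : ∀ n : ℕ, (fun p : Σ k : Fin r, Fin (m k) => α p.1 ^ n * v p.1 p.2) ∈ W := by
    intro n
    induction n with
    | zero => simpa using hv
    | succ n ih =>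
        have := hT _ ih
        have heq : (fun p : Σ k : Fin r, Fin (m k) => α p.1 * (α p.1 ^ n * v p.1 p.2))
            = fun p : Σ k : Fin r, Fin (m k) => α p.1 ^ (n + 1) * v p.1 p.2 := by
          funext p; ring
        rwa [heq] at this
  -- polynomials
  have hpoly : ∀ q : ℂ[X],
      (fun p : Σ k : Fin r, Fin (m k) => q.eval (α p.1) * v p.1 p.2) ∈ W := by
    intro q
    induction q using Polynomial.induction_on' with
    | add q₁ q₂ h₁ h₂ =>
        have := W.add_mem h₁ h₂
        have heq : ((fun p : Σ k : Fin r, Fin (m k) => q₁.eval (α p.1) * v p.1 p.2)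
            + fun p : Σ k : Fin r, Fin (m k) => q₂.eval (α p.1) * v p.1 p.2)
            = fun p : Σ k : Fin r, Fin (m k) => (q₁ + q₂).eval (α p.1) * v p.1 p.2 := by
          funext p; simp [add_mul]
        rwa [heq] at this
    | monomial n c =>
        have := W.smul_mem c (hpow n)
        have heq : (c • fun p : Σ k : Fin r, Fin (m k) => α p.1 ^ n * v p.1 p.2)
            = fun p : Σ k : Fin r, Fin (m k) => (monomial n c).eval (α p.1) * v p.1 p.2 := by
          funext p; simp [mul_assoc]
        rwa [heq] at this
  -- projection on block k
  have hvk : ∀ k : Fin r, emb m k (v k) ∈ W := by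
    intro k
    have := hpoly (Lagrange.basis Finset.univ α k)
    have heq : (fun p : Σ k : Fin r, Fin (m k) =>
        (Lagrange.basis Finset.univ α k).eval (α p.1) * v p.1 p.2) = emb m k (v k) := by
      funext p
      obtain ⟨k', i⟩ := p
      by_cases h : k' = k
      · subst h
        rw [Lagrange.eval_basis_self (hα.injOn) (Finset.mem_univ k'), one_mul]
        exact (emb_apply_mk m k' (v k') i).symm
      · rw [Lagrange.eval_basis_of_ne (fun hh => h hh.symm) (Finset.mem_univ k'), zero_mul]
        exact (emb_apply_ne m k (v k) ⟨k', i⟩ h).symm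
    rwa [heq] at this
  -- y-iterates of projected vectors
  have hiter : ∀ (k : Fin r) (j : ℕ), emb m k (((y k) ^ j).mulVec (v k)) ∈ W := by
    intro k j
    induction j with
    | zero => simpa using hvk k
    | succ j ih =>
        have := hy _ ih
        rw [blockDiagonal'_mulVec_emb] at this
        have heq : (y k).mulVec (((y k) ^ j).mulVec (v k))
            = ((y k) ^ (j + 1)).mulVec (v k) := by
          rw [mulVec_mulVec, ← pow_succ']
        rwa [heq] at this
  -- every embedded vector lies in W
  have hemb : ∀ (k : Fin r) (u : Fin (m k) → ℂ), emb m k u ∈ W := by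
    intro k u
    have hsub : Submodule.span ℂ
        (Set.range fun j : ℕ => Matrix.mulVec ((y k) ^ j) (v k)) ≤ W.comap (emb m k) := by
      apply Submodule.span_le.2
      rintro _ ⟨j, rfl⟩
      exact hiter k j
    have : u ∈ W.comap (emb m k) := hsub (by rw [hcyc k]; trivial)
    exact this
  -- conclude
  rw [eq_top_iff]
  intro w _
  rw [← sum_emb m w]
  exact Submodule.sum_mem W fun k _ => hemb k _
end

section
/- Let n ≥ 1 and let x be a diagonalizable n×n complex matrix with exactly r distinct eigenvalues α₁, …, α_r, and set m_k = dim_ℂ ker(x − α_k·1). Then the centralizer 𝔤_x has dimension m₁² + … + m_r², and the commutator set C(x) = {y·z − z·y : y, z ∈ 𝔤_x} is a ℂ-linear subspace of 𝔤_x of dimension (m₁² + … + m_r²) − r. -/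
/-!
Write `x = P · diag(α ∘ c) · P⁻¹` with `c : Fin n → Fin r` surjective, so that `mₖ = #c⁻¹(k)`.
A matrix commutes with `diag(α ∘ c)` iff it is block diagonal along the fibres of `c`, so
conjugation by `P` after the block-diagonal embedding is an algebra isomorphism
`∏ₖ M_{mₖ}(ℂ) ≃ 𝔤_x`; this gives `dim 𝔤_x = Σ mₖ²`. Commutators in a product of matrix algebras
are computed blockwise, and by Shoda's theorem the commutators in `M_m(ℂ)` are exactly the
trace-zero matrices. Hence `C(x)` is the image of the kernel of the surjection
`(Wₖ)ₖ ↦ (tr Wₖ)ₖ` onto `ℂʳ`, a subspace of dimension `Σ mₖ² - r`.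

Shoda's theorem: a trace-zero endomorphism that is not scalar moves some `v` out of `K ∙ v`, so
there is a hyperplane `H ∌ v` containing `f v`; the compression of `f` to `H` still has trace
zero, and induction yields a basis in which `f` has zero diagonal. A zero-diagonal matrix `A`
is the commutator of `diag t` and `(A i j / (t i - t j))` for pairwise distinct `t i`.
-/

/-- The centralizer `𝔤ₓ = {y : x·y = y·x}` as a ℂ-linear subspace of `Mₙ(ℂ)`. -/
noncomputable def matCentralizer (n : ℕ) (x : Matrix (Fin n) (Fin n) ℂ) :
    Submodule ℂ (Matrix (Fin n) (Fin n) ℂ) where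
  carrier := {y | x * y = y * x}
  add_mem' := by
    intro a b ha hb
    simp only [Set.mem_setOf_eq] at *
    rw [mul_add, add_mul, ha, hb]
  zero_mem' := by simp
  smul_mem' := by
    intro d a ha
    simp only [Set.mem_setOf_eq] at *
    rw [mul_smul_comm, smul_mul_assoc, ha]

/-- The set of commutators of elements of the centralizer of `x`. -/
def commSet (n : ℕ) (x : Matrix (Fin n) (Fin n) ℂ) : Set (Matrix (Fin n) (Fin n) ℂ) :=
  {t | ∃ y z : Matrix (Fin n) (Fin n) ℂ, x * y = y * x ∧ x * z = z * x ∧ t = y * z - z * y}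

open Module

section Hyperplanes

variable {K V : Type*} [Field K] [AddCommGroup V] [Module K V]

namespace LinearMap

def projKerAlong (φ : V →ₗ[K] K) (v : V) (hv : φ v = 1) : V →ₗ[K] ker φ :=
  codRestrict _ (id - φ.smulRight v) fun z => by simp [hv]

theorem coe_projKerAlong_apply (φ : V →ₗ[K] K) (v : V) (hv : φ v = 1) (z : V) :
    (projKerAlong φ v hv z : V) = z - φ z • v :=
  rfl

theorem trace_projKerAlong_comp_comp_subtype [FiniteDimensional K V] (φ : V →ₗ[K] K) (v : V)
    (hv : φ v = 1) (f : Module.End K V) :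
    trace K (ker φ) ((projKerAlong φ v hv ∘ₗ f) ∘ₗ (ker φ).subtype) = trace K V f - φ (f v) :=
  calc trace K (ker φ) ((projKerAlong φ v hv ∘ₗ f) ∘ₗ (ker φ).subtype)
      = trace K V ((ker φ).subtype ∘ₗ projKerAlong φ v hv ∘ₗ f) :=
        (trace_comp_comm' _ _).symm
    _ = trace K V (f - (φ ∘ₗ f).smulRight v) := rfl
    _ = trace K V f - φ (f v) := by rw [map_sub, trace_smulRight, comp_apply]

end LinearMap

namespace Module.Basis

variable {n : ℕ}

noncomputable def finConsKer (φ : V →ₗ[K] K) (v : V) (hv : φ v = 1)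
    (b : Basis (Fin n) K (LinearMap.ker φ)) : Basis (Fin (n + 1)) K V :=
  mkFinCons v b (fun c z hz hcz => by simpa [hv, LinearMap.mem_ker.mp hz] using congr(φ $hcz))
    fun z => ⟨-φ z, by simp [hv]⟩

theorem coe_finConsKer (φ : V →ₗ[K] K) (v : V) (hv : φ v = 1)
    (b : Basis (Fin n) K (LinearMap.ker φ)) :
    ⇑(finConsKer φ v hv b) = Fin.cons v (Subtype.val ∘ b) :=
  coe_mkFinCons _ _ _ _

theorem finConsKer_repr (φ : V →ₗ[K] K) (v : V) (hv : φ v = 1)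
    (b : Basis (Fin n) K (LinearMap.ker φ)) (z : V) :
    ⇑((finConsKer φ v hv b).repr z) =
      Fin.cons (φ z) (b.repr (LinearMap.projKerAlong φ v hv z)) := by
  set c : Fin (n + 1) → K := Fin.cons (φ z) (b.repr (LinearMap.projKerAlong φ v hv z))
  have hz : ∑ i, c i • finConsKer φ v hv b i = z := by
    have hπ := congr_arg Subtype.val (b.sum_repr (LinearMap.projKerAlong φ v hv z))
    push_cast at hπ
    simp only [Fin.sum_univ_succ, coe_finConsKer, c, Fin.cons_zero, Fin.cons_succ,
      Function.comp_apply, hπ]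
    rw [LinearMap.coe_projKerAlong_apply, add_sub_cancel]
  conv_lhs => rw [← hz]
  exact repr_sum_self _ _

end Module.Basis

namespace Module.End

theorem exists_eq_smul_id_of_forall_mem_span_singleton (f : Module.End K V)
    (hf : ∀ v, f v ∈ K ∙ v) : ∃ c : K, f = c • LinearMap.id := by
  rcases subsingleton_or_nontrivial V with hV | hV
  · exact ⟨0, Subsingleton.elim _ _⟩
  obtain ⟨v₀, hv₀⟩ := exists_ne (0 : V)
  obtain ⟨c, hc⟩ := Submodule.mem_span_singleton.mp (hf v₀)
  refine ⟨c, LinearMap.ext fun v => ?_⟩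
  obtain ⟨a, ha⟩ := Submodule.mem_span_singleton.mp (hf v)
  by_cases hli : LinearIndependent K ![v₀, v]
  · obtain ⟨b, hb⟩ := Submodule.mem_span_singleton.mp (hf (v₀ + v))
    have hdep : (b - c) • v₀ + (b - a) • v = 0 := by
      rw [sub_smul, sub_smul, hc, ha, sub_add_sub_comm, ← smul_add, hb, map_add, sub_self]
    obtain ⟨hbc, hba⟩ := LinearIndependent.pair_iff.mp hli _ _ hdep
    rw [LinearMap.smul_apply, LinearMap.id_apply, ← ha, ← sub_eq_zero.mp hbc, sub_eq_zero.mp hba]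
  · obtain ⟨t, rfl⟩ : ∃ t : K, t • v₀ = v := by
      simpa [LinearIndependent.pair_iff' hv₀] using hli
    simp [← hc]

theorem eq_zero_of_forall_mem_span_singleton_of_trace_eq_zero [CharZero K] [FiniteDimensional K V]
    (f : Module.End K V) (hf : ∀ v, f v ∈ K ∙ v) (htr : LinearMap.trace K V f = 0) : f = 0 := by
  obtain ⟨c, rfl⟩ := exists_eq_smul_id_of_forall_mem_span_singleton f hf
  rw [map_smul, LinearMap.trace_id, smul_eq_mul, mul_eq_zero, Nat.cast_eq_zero,
    finrank_eq_zero_iff_of_free] at htr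
  rcases htr with rfl | hV
  · exact zero_smul K _
  · exact Subsingleton.elim _ _

theorem exists_apply_eq_one_and_apply_apply_eq_zero (f : Module.End K V)
    (hf : ¬∀ v, f v ∈ K ∙ v) : ∃ (v : V) (φ : V →ₗ[K] K), φ v = 1 ∧ φ (f v) = 0 := by
  push Not at hf
  obtain ⟨v, hv⟩ := hf
  have hv0 : v ≠ 0 := by rintro rfl; simp at hv
  have hvf : v ∉ K ∙ f v := by
    intro h
    obtain ⟨a, ha⟩ := Submodule.mem_span_singleton.mp h
    have ha0 : a ≠ 0 := by rintro rfl; exact hv0 (by simpa using ha.symm)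
    exact hv (Submodule.mem_span_singleton.mpr ⟨a⁻¹, (inv_smul_eq_iff₀ ha0).mpr ha.symm⟩)
  obtain ⟨φ, hφv, hφf⟩ := Submodule.exists_le_ker_of_notMem hvf
  refine ⟨v, (φ v)⁻¹ • φ, inv_mul_cancel₀ hφv, ?_⟩
  simp [LinearMap.mem_ker.mp (hφf (Submodule.mem_span_singleton_self _))]

theorem exists_basis_toMatrix_diag_eq_zero [CharZero K] [FiniteDimensional K V]
    (f : Module.End K V) (hf : LinearMap.trace K V f = 0) :
    ∃ (n : ℕ) (b : Basis (Fin n) K V), ∀ i, LinearMap.toMatrix b b f i i = 0 := by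
  induction hd : finrank K V using Nat.strong_induction_on generalizing V with
  | _ d ih =>
  by_cases hsc : ∀ v, f v ∈ K ∙ v
  · have hf0 := eq_zero_of_forall_mem_span_singleton_of_trace_eq_zero f hsc hf
    exact ⟨_, finBasis K V, fun i => by simp [hf0]⟩
  obtain ⟨v, φ, hφv, hφf⟩ := exists_apply_eq_one_and_apply_apply_eq_zero f hsc
  set g := (LinearMap.projKerAlong φ v hφv ∘ₗ f) ∘ₗ (LinearMap.ker φ).subtype
  have hg : LinearMap.trace K _ g = 0 := by
    rw [LinearMap.trace_projKerAlong_comp_comp_subtype, hf, hφf, sub_zero]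
  have hvφ : v ∉ LinearMap.ker φ := by simp [hφv]
  have hlt : finrank K (LinearMap.ker φ) < d :=
    hd ▸ Submodule.finrank_lt fun h => hvφ (h ▸ Submodule.mem_top)
  obtain ⟨n, b, hb⟩ := ih _ hlt g hg rfl
  refine ⟨n + 1, Basis.finConsKer φ v hφv b, Fin.cases ?_ fun j => ?_⟩
  · simp [LinearMap.toMatrix_apply, Basis.coe_finConsKer, Basis.finConsKer_repr, hφf]
  · simpa [LinearMap.toMatrix_apply, Basis.coe_finConsKer, Basis.finConsKer_repr, g] using hb j

end Module.End

end Hyperplanes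

namespace Matrix

section Shoda

variable {ι K : Type*} [Fintype ι] [DecidableEq ι] [Field K] [CharZero K]

theorem exists_eq_mul_sub_mul_of_diag_eq_zero (A : Matrix ι ι K) (hA : ∀ i, A i i = 0) :
    ∃ X Y : Matrix ι ι K, A = X * Y - Y * X := by
  set t : ι → K := fun i => (Fintype.equivFin ι i : ℕ)
  have ht : Function.Injective t := fun i j h =>
    (Fintype.equivFin ι).injective (Fin.ext (Nat.cast_injective h))
  refine ⟨diagonal t, of fun i j => A i j / (t i - t j), ?_⟩
  ext i j
  rcases eq_or_ne i j with rfl | hij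
  · simp [hA]
  · have hdiff : t i - t j ≠ 0 := sub_ne_zero.mpr (ht.ne hij)
    simp only [sub_apply, diagonal_mul, mul_diagonal, of_apply]
    field_simp

theorem exists_eq_mul_sub_mul_of_trace_eq_zero (A : Matrix ι ι K) (hA : A.trace = 0) :
    ∃ X Y : Matrix ι ι K, A = X * Y - Y * X := by
  obtain ⟨n, b, hb⟩ :=
    Module.End.exists_basis_toMatrix_diag_eq_zero (toLin' A) (by rwa [trace_toLin'_eq])
  let e := toLinAlgEquiv'.trans (LinearMap.toMatrixAlgEquiv b)
  obtain ⟨X, Y, hXY⟩ := exists_eq_mul_sub_mul_of_diag_eq_zero (e A) hb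
  exact ⟨e.symm X, e.symm Y, e.injective (by simp [hXY])⟩

end Shoda

section BlockDiagonal

variable {o R : Type*} {m' : o → Type*} [Fintype o] [DecidableEq o] [∀ i, Fintype (m' i)]
  [∀ i, DecidableEq (m' i)] [CommSemiring R]

variable (m' R) in
def blockDiagonal'AlgHom : (∀ i, Matrix (m' i) (m' i) R) →ₐ[R] Matrix (Σ i, m' i) (Σ i, m' i) R :=
  { blockDiagonal'RingHom m' R with
    commutes' := fun r => by simp [Algebra.algebraMap_eq_smul_one] }

end BlockDiagonal

section Blocks

variable {ι κ R : Type*} [Fintype ι] [DecidableEq ι] [Fintype κ] [DecidableEq κ] [CommSemiring R]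

variable (R) in
def blockEmbedding (c : ι → κ) :
    (∀ k, Matrix {i // c i = k} {i // c i = k} R) →ₐ[R] Matrix ι ι R :=
  (reindexAlgEquiv R R (Equiv.sigmaFiberEquiv c)).toAlgHom.comp (blockDiagonal'AlgHom R _)

theorem blockEmbedding_eq_reindex (c : ι → κ) (W : ∀ k, Matrix {i // c i = k} {i // c i = k} R) :
    blockEmbedding R c W =
      reindex (Equiv.sigmaFiberEquiv c) (Equiv.sigmaFiberEquiv c) (blockDiagonal' W) :=
  rfl

theorem blockEmbedding_injective (c : ι → κ) : Function.Injective (blockEmbedding R c) :=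
  fun _ _ h => blockDiagonal'_injective ((reindexAlgEquiv R R _).injective h)

theorem range_blockEmbedding (c : ι → κ) :
    Set.range (blockEmbedding R c) = {y | ∀ i j, c i ≠ c j → y i j = 0} := by
  ext y
  constructor
  · rintro ⟨W, rfl⟩ i j hij
    rw [blockEmbedding_eq_reindex]
    exact blockDiagonal'_apply_ne W _ _ hij
  · intro hy
    refine ⟨fun k => y.submatrix (↑) (↑), ?_⟩
    rw [blockEmbedding_eq_reindex]
    refine (reindex (Equiv.sigmaFiberEquiv c) (Equiv.sigmaFiberEquiv c)).eq_symm_apply.mp ?_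
    ext ⟨k, a⟩ ⟨k', b⟩
    rcases eq_or_ne k k' with rfl | hkk'
    · simp
    · have : c a ≠ c b := by rw [a.2, b.2]; exact hkk'
      simp [blockDiagonal'_apply_ne _ _ _ hkk', hy _ _ this]

end Blocks

section BlockTraces

variable {κ : Type*} {m : κ → Type*} {K : Type*} [∀ k, Fintype (m k)] [Field K]

variable (m K) in
def blockTraces : (∀ k, Matrix (m k) (m k) K) →ₗ[K] κ → K :=
  LinearMap.pi fun k => traceLinearMap (m k) K K ∘ₗ LinearMap.proj k

theorem blockTraces_apply (W : ∀ k, Matrix (m k) (m k) K) (k : κ) :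
    blockTraces m K W k = (W k).trace :=
  rfl

theorem setOf_eq_mul_sub_mul_eq_ker_blockTraces [∀ k, DecidableEq (m k)] [CharZero K] :
    {W : ∀ k, Matrix (m k) (m k) K | ∃ Y Z, W = Y * Z - Z * Y} =
      LinearMap.ker (blockTraces m K) := by
  ext W
  constructor
  · rintro ⟨Y, Z, rfl⟩
    ext k
    simp only [blockTraces_apply, Pi.sub_apply, Pi.mul_apply, trace_sub, trace_mul_comm (Y k),
      sub_self, Pi.zero_apply]
  · intro h
    choose Y Z hYZ using fun k => exists_eq_mul_sub_mul_of_trace_eq_zero (W k) (congr_fun h k)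
    exact ⟨Y, Z, funext hYZ⟩

variable (K) in
theorem finrank_pi_matrix [Fintype κ] :
    finrank K (∀ k, Matrix (m k) (m k) K) = ∑ k, Fintype.card (m k) ^ 2 := by
  simp [finrank_pi_fintype, finrank_matrix, sq]

theorem finrank_ker_blockTraces_add_card [Fintype κ] [∀ k, Nonempty (m k)] :
    finrank K (LinearMap.ker (blockTraces m K)) + Fintype.card κ =
      ∑ k, Fintype.card (m k) ^ 2 := by
  have hsurj : Function.Surjective (blockTraces m K) := by
    intro v
    choose W hW using fun k => trace_surjective (n := m k) (v k)
    exact ⟨W, funext hW⟩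
  have hnullity := LinearMap.finrank_range_add_finrank_ker (blockTraces m K)
  rw [LinearMap.range_eq_top.mpr hsurj, finrank_top, finrank_fintype_fun_eq_card,
    finrank_pi_matrix] at hnullity
  omega

end BlockTraces

section Eigenspaces

theorem finrank_ker_mulVecLin_add_rank {ι K : Type*} [Fintype ι] [Field K]
    (M : Matrix ι ι K) : finrank K (LinearMap.ker M.mulVecLin) + M.rank = Fintype.card ι := by
  rw [Matrix.rank, add_comm, LinearMap.finrank_range_add_finrank_ker, finrank_fintype_fun_eq_card]

variable {ι K : Type*} [Fintype ι] [DecidableEq ι] [Field K] [DecidableEq K]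

theorem finrank_ker_conj_diagonal_sub_smul {P : Matrix ι ι K} (hP : IsUnit P) (d : ι → K)
    (β : K) : finrank K (LinearMap.ker (P * diagonal d * P⁻¹ - β • 1).mulVecLin) =
      Fintype.card {i // d i = β} := by
  have hdet : IsUnit P.det := (isUnit_iff_isUnit_det P).mp hP
  have hM : P * diagonal d * P⁻¹ - β • 1 = P * diagonal (fun i => d i - β) * P⁻¹ := by
    rw [← diagonal_sub d fun _ => β, ← smul_one_eq_diagonal,
      mul_sub, sub_mul, mul_smul_comm, mul_one, smul_mul_assoc, mul_nonsing_inv _ hdet]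
  have hrank : (P * diagonal (fun i => d i - β) * P⁻¹).rank = Fintype.card {i // ¬d i = β} := by
    rw [rank_mul_eq_left_of_isUnit_det _ _ ((isUnit_nonsing_inv_det_iff).mpr hdet),
      rank_mul_eq_right_of_isUnit_det _ _ hdet, rank_diagonal]
    exact Fintype.card_congr (Equiv.subtypeEquivRight fun i => sub_ne_zero)
  have hnullity := finrank_ker_mulVecLin_add_rank (P * diagonal (fun i => d i - β) * P⁻¹)
  have hcompl := Fintype.card_subtype_compl (fun i => d i = β)
  have hle := Fintype.card_subtype_le (fun i => d i = β)
  rw [hM]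
  omega

theorem finrank_ker_conj_diagonal_comp_sub_smul {r : ℕ} {P : Matrix ι ι K} (hP : IsUnit P)
    {α : Fin r → K} (hα : Function.Injective α) (c : ι → Fin r) (k : Fin r) :
    finrank K (LinearMap.ker (P * diagonal (α ∘ c) * P⁻¹ - α k • 1).mulVecLin) =
      Fintype.card {i // c i = k} := by
  rw [finrank_ker_conj_diagonal_sub_smul hP]
  exact Fintype.card_congr (Equiv.subtypeEquivRight fun i => hα.eq_iff)

theorem exists_surjective_eq_diagonal_comp {r : ℕ} {P D : Matrix ι ι K} (hP : IsUnit P)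
    (hD : D.IsDiag) {α : Fin r → K} (hα : Function.Injective α)
    (heig : ∀ k, LinearMap.ker (P * D * P⁻¹ - α k • 1).mulVecLin ≠ ⊥)
    (hall : ∀ β, LinearMap.ker (P * D * P⁻¹ - β • 1).mulVecLin ≠ ⊥ → ∃ k, β = α k) :
    ∃ c : ι → Fin r, Function.Surjective c ∧ D = diagonal (α ∘ c) := by
  rw [← hD.diagonal_diag] at heig hall ⊢
  have hker : ∀ β, LinearMap.ker (P * diagonal D.diag * P⁻¹ - β • 1).mulVecLin ≠ ⊥ ↔
      ∃ i, D.diag i = β := by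
    intro β
    rw [ne_eq, ← Submodule.finrank_eq_zero, finrank_ker_conj_diagonal_sub_smul hP,
      Fintype.card_eq_zero_iff, not_isEmpty_iff, nonempty_subtype]
  choose c hc using fun i => hall _ ((hker _).mpr ⟨i, rfl⟩)
  refine ⟨c, fun k => ?_, congrArg diagonal (funext hc)⟩
  obtain ⟨i, hi⟩ := (hker _).mp (heig k)
  exact ⟨i, hα ((hc i).symm.trans hi)⟩

end Eigenspaces

end Matrix

section Centralizers

open Matrix

variable {n : ℕ}

theorem mem_matCentralizer_diagonal_iff (d : Fin n → ℂ) (y : Matrix (Fin n) (Fin n) ℂ) :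
    y ∈ matCentralizer n (diagonal d) ↔ ∀ i j, d i ≠ d j → y i j = 0 := by
  change diagonal d * y = y * diagonal d ↔ _
  simp only [← Matrix.ext_iff, diagonal_mul, mul_diagonal]
  refine forall₂_congr fun i j => ?_
  rw [mul_comm (y i j), ← sub_eq_zero, ← sub_mul, mul_eq_zero, sub_eq_zero, or_iff_not_imp_left]

theorem mem_matCentralizer_map_iff (φ : Matrix (Fin n) (Fin n) ℂ ≃ₐ[ℂ] Matrix (Fin n) (Fin n) ℂ)
    (x y : Matrix (Fin n) (Fin n) ℂ) :
    y ∈ matCentralizer n (φ x) ↔ φ.symm y ∈ matCentralizer n x := by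
  change φ x * y = y * φ x ↔ x * φ.symm y = φ.symm y * x
  rw [← φ.symm.injective.eq_iff, map_mul, map_mul, φ.symm_apply_apply]

theorem range_algEquiv_comp_blockEmbedding {r : ℕ}
    (φ : Matrix (Fin n) (Fin n) ℂ ≃ₐ[ℂ] Matrix (Fin n) (Fin n) ℂ) {α : Fin r → ℂ}
    (hα : Function.Injective α) (c : Fin n → Fin r) :
    Set.range (φ.toAlgHom.comp (blockEmbedding ℂ c)) =
      matCentralizer n (φ (diagonal (α ∘ c))) := by
  ext y
  have : y ∈ Set.range (φ.toAlgHom.comp (blockEmbedding ℂ c)) ↔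
      φ.symm y ∈ Set.range (blockEmbedding ℂ c) :=
    ⟨by rintro ⟨W, rfl⟩; exact ⟨W, by simp⟩, fun ⟨W, hW⟩ => ⟨W, by simp [hW]⟩⟩
  rw [this, range_blockEmbedding, SetLike.mem_coe, mem_matCentralizer_map_iff,
    mem_matCentralizer_diagonal_iff]
  simp [hα.ne_iff]

theorem finrank_matCentralizer_eq_of_range {A : Type*} [AddCommGroup A] [Module ℂ A]
    {x : Matrix (Fin n) (Fin n) ℂ} (Ψ : A →ₗ[ℂ] Matrix (Fin n) (Fin n) ℂ)
    (hΨ : Function.Injective Ψ) (h : Set.range Ψ = matCentralizer n x) :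
    finrank ℂ (matCentralizer n x) = finrank ℂ A := by
  have hrange : LinearMap.range Ψ = matCentralizer n x :=
    SetLike.coe_injective (by rw [LinearMap.coe_range, h])
  rw [← hrange, LinearMap.finrank_range_of_inj hΨ]

theorem commSet_eq_image_of_range {A : Type*} [Ring A] [Algebra ℂ A]
    {x : Matrix (Fin n) (Fin n) ℂ} (Ψ : A →ₐ[ℂ] Matrix (Fin n) (Fin n) ℂ)
    (h : Set.range Ψ = matCentralizer n x) :
    commSet n x = Ψ '' {W | ∃ Y Z, W = Y * Z - Z * Y} := by
  ext t
  constructor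
  · rintro ⟨y, z, hy, hz, rfl⟩
    obtain ⟨Y, rfl⟩ : y ∈ Set.range Ψ := h ▸ hy
    obtain ⟨Z, rfl⟩ : z ∈ Set.range Ψ := h ▸ hz
    exact ⟨Y * Z - Z * Y, ⟨Y, Z, rfl⟩, by simp⟩
  · rintro ⟨_, ⟨Y, Z, rfl⟩, rfl⟩
    have hY : Ψ Y ∈ (matCentralizer n x : Set _) := h ▸ Set.mem_range_self Y
    have hZ : Ψ Z ∈ (matCentralizer n x : Set _) := h ▸ Set.mem_range_self Z
    exact ⟨Ψ Y, Ψ Z, hY, hZ, by simp⟩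

end Centralizers

theorem stmt_13_general (n : ℕ) (x : Matrix (Fin n) (Fin n) ℂ)
    (hdiag : ∃ P D : Matrix (Fin n) (Fin n) ℂ, IsUnit P ∧ D.IsDiag ∧ x = P * D * P⁻¹)
    (r : ℕ) (α : Fin r → ℂ) (hα : Function.Injective α)
    (heig : ∀ k, LinearMap.ker (Matrix.mulVecLin (x - α k • 1)) ≠ ⊥)
    (hall : ∀ β : ℂ, LinearMap.ker (Matrix.mulVecLin (x - β • 1)) ≠ ⊥ → ∃ k, β = α k) :
    Module.finrank ℂ (matCentralizer n x) =
      ∑ k, (Module.finrank ℂ (LinearMap.ker (Matrix.mulVecLin (x - α k • 1)))) ^ 2 ∧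
    commSet n x = (Submodule.span ℂ (commSet n x) : Set (Matrix (Fin n) (Fin n) ℂ)) ∧
    Module.finrank ℂ (Submodule.span ℂ (commSet n x)) + r =
      ∑ k, (Module.finrank ℂ (LinearMap.ker (Matrix.mulVecLin (x - α k • 1)))) ^ 2 := by
  obtain ⟨P, D, hP, hD, rfl⟩ := hdiag
  obtain ⟨c, hc, rfl⟩ := Matrix.exists_surjective_eq_diagonal_comp hP hD hα heig hall
  simp only [Matrix.finrank_ker_conj_diagonal_comp_sub_smul hP hα]
  have (k : Fin r) : Nonempty {i // c i = k} := nonempty_subtype.mpr (hc k)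
  let φ := MulSemiringAction.toAlgEquiv ℂ (Matrix (Fin n) (Fin n) ℂ) (ConjAct.toConjAct hP.unit)
  have hφ : φ (Matrix.diagonal (α ∘ c)) = P * Matrix.diagonal (α ∘ c) * P⁻¹ := by
    simp [φ, ConjAct.units_smul_def, Matrix.coe_units_inv]
  let Ψ := φ.toAlgHom.comp (Matrix.blockEmbedding ℂ c)
  have hrange : Set.range Ψ = matCentralizer n (P * Matrix.diagonal (α ∘ c) * P⁻¹) :=
    hφ ▸ range_algEquiv_comp_blockEmbedding φ hα c
  have hΨ : Function.Injective Ψ := φ.injective.comp (Matrix.blockEmbedding_injective c)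
  have hC : commSet n (P * Matrix.diagonal (α ∘ c) * P⁻¹) =
      (LinearMap.ker (Matrix.blockTraces _ ℂ)).map Ψ.toLinearMap := by
    rw [commSet_eq_image_of_range Ψ hrange, Matrix.setOf_eq_mul_sub_mul_eq_ker_blockTraces]
    simp
  refine ⟨?_, by rw [hC, Submodule.span_eq], ?_⟩
  · rw [finrank_matCentralizer_eq_of_range Ψ.toLinearMap hΨ hrange, Matrix.finrank_pi_matrix]
  · rw [hC, Submodule.span_eq, ← (Submodule.equivMapOfInjective _ hΨ _).finrank_eq,
      ← Matrix.finrank_ker_blockTraces_add_card (K := ℂ), Fintype.card_fin]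

/-- For a diagonalizable `x` with exactly `r` distinct eigenvalues `α₁, …, α_r` and
eigenspace dimensions `mₖ`, the centralizer has dimension `Σ mₖ²` and the commutator set
`C(x)` is a subspace of dimension `(Σ mₖ²) - r`. -/
theorem stmt_13 (n : ℕ) (hn : 1 ≤ n) (x : Matrix (Fin n) (Fin n) ℂ)
    (hdiag : ∃ P D : Matrix (Fin n) (Fin n) ℂ, IsUnit P ∧ D.IsDiag ∧ x = P * D * P⁻¹)
    (r : ℕ) (α : Fin r → ℂ) (hα : Function.Injective α)
    (heig : ∀ k, LinearMap.ker (Matrix.mulVecLin (x - α k • 1)) ≠ ⊥)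
    (hall : ∀ β : ℂ, LinearMap.ker (Matrix.mulVecLin (x - β • 1)) ≠ ⊥ → ∃ k, β = α k) :
    Module.finrank ℂ (matCentralizer n x) =
      ∑ k, (Module.finrank ℂ (LinearMap.ker (Matrix.mulVecLin (x - α k • 1)))) ^ 2 ∧
    commSet n x = (Submodule.span ℂ (commSet n x) : Set (Matrix (Fin n) (Fin n) ℂ)) ∧
    Module.finrank ℂ (Submodule.span ℂ (commSet n x)) + r =
      ∑ k, (Module.finrank ℂ (LinearMap.ker (Matrix.mulVecLin (x - α k • 1)))) ^ 2 :=
  stmt_13_general n x hdiag r α hα heig hall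
end
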